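/- Let a be a positive integer and b an integer with gcd(a, b) = 1. Define s(a; b) := (1/(4a)) · Σ_{k=1}^{a−1} cot(πk/a) · cot(πbk/a). Then s(a; b) = 0 if and only if a divides b² + 1. -/

import Mathlib

open Real Finset

/-- The Dedekind sum in cotangent form
`s(a; b) = (1/(4a)) · Σ_{k=1}^{a−1} cot(πk/a) · cot(πbk/a)`. -/
noncomputable def dedekindSum (a : ℕ) (b : ℤ) : ℝ :=
  (1 / (4 * (a : ℝ))) * ∑ k ∈ Finset.Ico 1 a,
    Real.cot (Real.pi * k / a) * Real.cot (Real.pi * b * k / a)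

/-!
Summing `Σ_{j<a} (a - 2j) ζ^j` over an `a`-th root of unity `ζ = e^{2πim/a} ≠ 1` gives the finite
Fourier expansion `a·cot(πm/a) = Σ_{y mod a} sawtooth(y) sin(2πym/a)` of the cotangent.
Orthogonality of the sines inverts it, and then
`4a²·s(a; b) = Σ_{x mod a} sawtooth(x) sawtooth(bx)`.

If `b² ≡ -1 (mod a)`, the substitution `x ↦ bx` turns this sum into its negative, so it vanishes.
Conversely, with `T = Σ x·(bx mod a)` the sum equals `4T - a²(a - 1)`. Since `x ↦ bx` permutes the
residues, `Σ (bx mod a - bx)² = (b² + 1)Σx² - 2bT`, which is divisible by `a²`. Together with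
`4T = a²(a - 1)` and `6Σx² = a(a - 1)(2a - 1)` this gives `a ∣ (b² + 1)(a - 1)(2a - 1)`, and
`(a - 1)(2a - 1) ≡ 1 (mod a)`.
-/

lemma sub_one_mul_sum_mul_pow {R : Type*} [CommRing R] (z : R) (n : ℕ) :
    (z - 1) * ∑ j ∈ range n, (j : R) * z ^ j = n * z ^ n - ∑ j ∈ range n, z ^ (j + 1) := by
  induction n with
  | zero => simp
  | succ n ih =>
    rw [sum_range_succ, sum_range_succ, mul_add, ih]
    push_cast
    ring

lemma sum_sub_two_mul_mul_pow_of_pow_eq_one {K : Type*} [Field K] {z : K} (hz : z ≠ 1) {n : ℕ}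
    (hzn : z ^ n = 1) : ∑ j ∈ range n, ((n : K) - 2 * j) * z ^ j = 2 * n / (1 - z) := by
  have hgeom : ∑ j ∈ range n, z ^ j = 0 := by rw [geom_sum_eq hz, hzn, sub_self, zero_div]
  have hweighted := sub_one_mul_sum_mul_pow z n
  simp only [pow_succ, ← sum_mul, hgeom, zero_mul, hzn, mul_one, sub_zero] at hweighted
  rw [eq_div_iff (sub_ne_zero.2 hz.symm)]
  simp only [sub_mul, sum_sub_distrib, ← mul_sum, mul_assoc, hgeom]
  linear_combination 2 * hweighted

lemma Finset.six_mul_sum_range_sq (n : ℕ) :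
    6 * ∑ i ∈ range n, (i : ℤ) ^ 2 = n * (n - 1) * (2 * n - 1) := by
  induction n with
  | zero => simp
  | succ n ih =>
    rw [sum_range_succ, mul_add, ih]
    push_cast
    ring

namespace Complex

lemma exp_two_mul_I_eq_one_iff (θ : ℝ) : cexp (2 * θ * I) = 1 ↔ Real.sin θ = 0 := by
  rw [exp_eq_one_iff, Real.sin_eq_zero_iff]
  refine exists_congr fun k => ⟨fun h => ?_, fun h => ?_⟩
  · have := congrArg im h
    simp only [mul_im, mul_re, ofReal_re, ofReal_im, I_re, I_im, re_ofNat, im_ofNat,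
      intCast_re, intCast_im] at this
    linarith
  · rw [← h]
    push_cast
    ring

lemma exp_two_mul_I_pow (θ : ℝ) (k : ℕ) : cexp (2 * θ * I) ^ k = cexp ((2 * k * θ : ℝ) * I) := by
  rw [← exp_nat_mul]
  push_cast
  ring_nf

lemma exp_two_mul_I_pow_re (θ : ℝ) (k : ℕ) :
    (cexp (2 * θ * I) ^ k).re = Real.cos (2 * k * θ) := by
  rw [exp_two_mul_I_pow, exp_ofReal_mul_I_re]

lemma exp_two_mul_I_pow_im (θ : ℝ) (k : ℕ) :
    (cexp (2 * θ * I) ^ k).im = Real.sin (2 * k * θ) := by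
  rw [exp_two_mul_I_pow, exp_ofReal_mul_I_im]

lemma exp_two_mul_I_pow_eq_one {θ : ℝ} {n : ℕ} (h : Real.sin (n * θ) = 0) :
    cexp (2 * θ * I) ^ n = 1 := by
  rw [exp_two_mul_I_pow, ← (exp_two_mul_I_eq_one_iff _).2 h]
  push_cast
  ring_nf

end Complex

namespace Real

lemma sum_range_cos_two_mul {θ : ℝ} {n : ℕ} (h : sin (n * θ) = 0) :
    ∑ k ∈ range n, cos (2 * k * θ) = if sin θ = 0 then (n : ℝ) else 0 := by
  simp only [← Complex.exp_two_mul_I_pow_re, ← Complex.re_sum]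
  split_ifs with hθ
  · simp [(Complex.exp_two_mul_I_eq_one_iff θ).2 hθ]
  · rw [geom_sum_eq ((Complex.exp_two_mul_I_eq_one_iff θ).not.2 hθ),
      Complex.exp_two_mul_I_pow_eq_one h, sub_self, zero_div, Complex.zero_re]

/-- This also holds when `sin θ = 0`: there both sides vanish, `cot` having the junk value `0`. -/
lemma nat_mul_cot_eq_sum_range_mul_sin {θ : ℝ} {n : ℕ} (h : sin (n * θ) = 0) :
    n * cot θ = ∑ j ∈ range n, ((n : ℝ) - 2 * j) * sin (2 * j * θ) := by
  simp only [← Complex.exp_two_mul_I_pow_im]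
  by_cases hθ : sin θ = 0
  · simp [cot_eq_cos_div_sin, hθ, (Complex.exp_two_mul_I_eq_one_iff θ).2 hθ]
  have hz : Complex.exp (2 * θ * Complex.I) ≠ 1 := (Complex.exp_two_mul_I_eq_one_iff θ).not.2 hθ
  have hsum := sum_sub_two_mul_mul_pow_of_pow_eq_one hz (Complex.exp_two_mul_I_pow_eq_one h)
  have hcot : (2 * n / (1 - Complex.exp (2 * θ * Complex.I)) : ℂ) =
      n + Complex.I * (n * cot θ : ℝ) := by
    have h1z : 1 - Complex.exp (2 * θ * Complex.I) ≠ 0 := sub_ne_zero.2 hz.symm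
    rw [Complex.ofReal_mul, Complex.ofReal_cot, Complex.cot_eq_exp_ratio,
      mul_right_comm 2 Complex.I]
    field_simp
    push_cast
    ring
  have := congrArg Complex.im (hsum.trans hcot)
  simpa [Complex.im_sum, -Complex.ofReal_cot] using this.symm

lemma sin_pi_mul_div_eq_zero_iff {a : ℕ} [NeZero a] (m : ℤ) :
    sin (π * m / a) = 0 ↔ (m : ZMod a) = 0 := by
  have ha : (a : ℝ) ≠ 0 := Nat.cast_ne_zero.2 (NeZero.ne a)
  rw [sin_eq_zero_iff, ZMod.intCast_zmod_eq_zero_iff_dvd]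
  refine exists_congr fun k => ?_
  rw [eq_div_iff ha, show (k : ℝ) * π * a = π * ((a * k : ℤ) : ℝ) by push_cast; ring,
    mul_right_inj' pi_ne_zero, Int.cast_inj, eq_comm]

lemma sin_nat_mul_pi_mul_div (a : ℕ) [NeZero a] (m : ℤ) : sin (a * (π * m / a)) = 0 := by
  rw [mul_div_cancel₀ _ (Nat.cast_ne_zero.2 (NeZero.ne a)), mul_comm, sin_int_mul_pi]

end Real

namespace ZMod

variable {a : ℕ}

/-- `sawtooth x = -2a·((x/a))`, where `((·))` is the Dedekind sawtooth function. -/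
def sawtooth (x : ZMod a) : ℤ := (-x).val - x.val

@[simp]
lemma sawtooth_zero : sawtooth (0 : ZMod a) = 0 := by simp [sawtooth]

@[simp]
lemma sawtooth_neg (x : ZMod a) : sawtooth (-x) = -sawtooth x := by simp [sawtooth]

variable [NeZero a]

lemma sawtooth_of_ne_zero {x : ZMod a} (hx : x ≠ 0) : sawtooth x = a - 2 * x.val := by
  have : NeZero x := ⟨hx⟩
  rw [sawtooth, val_neg_of_ne_zero, Nat.cast_sub x.val_lt.le]
  ring

lemma sum_univ_eq_sum_range {M : Type*} [AddCommMonoid M] (f : ℕ → M) :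
    ∑ x : ZMod a, f x.val = ∑ i ∈ range a, f i := by
  obtain ⟨n, rfl⟩ : ∃ n, a = n + 1 := Nat.exists_eq_succ_of_ne_zero (NeZero.ne a)
  exact Fin.sum_univ_eq_sum_range f (n + 1)

lemma two_mul_sum_val : 2 * ∑ x : ZMod a, (x.val : ℤ) = a * (a - 1) := by
  have h := sum_range_id_mul_two a
  rw [sum_univ_eq_sum_range (fun i => (i : ℤ)), mul_comm]
  zify [NeZero.one_le] at h
  exact h

lemma six_mul_sum_val_sq : 6 * ∑ x : ZMod a, (x.val : ℤ) ^ 2 = a * (a - 1) * (2 * a - 1) := by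
  rw [sum_univ_eq_sum_range (fun i => (i : ℤ) ^ 2), six_mul_sum_range_sq]

lemma sum_cos (m : ℤ) :
    ∑ x : ZMod a, cos (2 * x.val * (π * m / a)) = if (m : ZMod a) = 0 then (a : ℝ) else 0 := by
  rw [sum_univ_eq_sum_range (fun k => cos (2 * k * (π * m / a))),
    sum_range_cos_two_mul (sin_nat_mul_pi_mul_div a m)]
  simp only [sin_pi_mul_div_eq_zero_iff]

lemma sum_sin_mul_sin (i c : ℤ) :
    ∑ x : ZMod a, sin (2 * x.val * (π * i / a)) * sin (2 * x.val * (π * c / a)) =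
      a / 2 * ((if (i : ZMod a) = c then 1 else 0) - if (i : ZMod a) = -c then 1 else 0) := by
  have hprod (x : ZMod a) : sin (2 * x.val * (π * i / a)) * sin (2 * x.val * (π * c / a)) =
      (cos (2 * x.val * (π * ↑(i - c) / a)) - cos (2 * x.val * (π * ↑(i + c) / a))) / 2 := by
    have hsub : 2 * x.val * (π * ↑(i - c) / a) =
        2 * x.val * (π * i / a) - 2 * x.val * (π * c / a) := by push_cast; ring
    have hadd : 2 * x.val * (π * ↑(i + c) / a) =
        2 * x.val * (π * i / a) + 2 * x.val * (π * c / a) := by push_cast; ring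
    rw [hsub, hadd, cos_sub, cos_add]
    ring
  simp only [hprod, ← sum_div, sum_sub_distrib, sum_cos]
  simp only [Int.cast_sub, Int.cast_add, sub_eq_zero, ← eq_neg_iff_add_eq_zero]
  split_ifs <;> ring

lemma nat_mul_cot_eq_sum_sawtooth_mul_sin (m : ℤ) :
    a * cot (π * m / a) = ∑ y : ZMod a, sawtooth y * sin (2 * y.val * (π * m / a)) := by
  rw [nat_mul_cot_eq_sum_range_mul_sin (sin_nat_mul_pi_mul_div a m),
    ← sum_univ_eq_sum_range (fun j => ((a : ℝ) - 2 * j) * sin (2 * j * (π * m / a)))]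
  refine sum_congr rfl fun y _ => ?_
  rcases eq_or_ne y 0 with rfl | hy
  · simp
  · rw [sawtooth_of_ne_zero hy]
    push_cast
    ring

lemma sum_cot_mul_sin_eq_sawtooth (m : ℤ) :
    ∑ x : ZMod a, cot (π * x.val / a) * sin (2 * x.val * (π * m / a)) = sawtooth (m : ZMod a) := by
  apply mul_left_cancel₀ (Nat.cast_ne_zero.2 (NeZero.ne a) : (a : ℝ) ≠ 0)
  calc (a : ℝ) * ∑ x : ZMod a, cot (π * x.val / a) * sin (2 * x.val * (π * m / a))
      = ∑ x : ZMod a, (∑ y : ZMod a, sawtooth y * sin (2 * y.val * (π * (x.val : ℤ) / a))) *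
          sin (2 * x.val * (π * m / a)) := by
        rw [mul_sum]
        refine sum_congr rfl fun x _ => ?_
        rw [← mul_assoc, ← nat_mul_cot_eq_sum_sawtooth_mul_sin, Int.cast_natCast]
    _ = ∑ y : ZMod a, sawtooth y *
          ∑ x : ZMod a, sin (2 * x.val * (π * (y.val : ℤ) / a)) *
            sin (2 * x.val * (π * m / a)) := by
        simp_rw [sum_mul, mul_sum, Int.cast_natCast]
        rw [sum_comm]
        refine sum_congr rfl fun y _ => sum_congr rfl fun x _ => ?_
        ring_nf
    _ = a * sawtooth (m : ZMod a) := by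
        simp_rw [sum_sin_mul_sin]
        simp only [Int.cast_natCast, natCast_zmod_val, mul_sub, mul_ite, mul_one, mul_zero,
          sum_sub_distrib, Fintype.sum_ite_eq', sawtooth_neg]
        push_cast
        ring

def sawtoothSum (β : ZMod a) : ℤ := ∑ x : ZMod a, sawtooth x * sawtooth (β * x)

lemma sawtoothSum_eq_zero_of_sq_eq_neg_one {β : ZMod a} (hβ : β ^ 2 = -1) : sawtoothSum β = 0 := by
  have hβunit : IsUnit β := IsUnit.of_mul_eq_one (-β) (by linear_combination -hβ)
  have h := (IsUnit.isUnit_iff_mulLeft_bijective.1 hβunit).sum_comp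
    (fun x => sawtooth x * sawtooth (β * x))
  simp only [← mul_assoc, ← sq, hβ, neg_mul, one_mul, sawtooth_neg, sum_neg_distrib,
    mul_comm (sawtooth (β * _))] at h
  rw [sawtoothSum]
  linarith

lemma sawtoothSum_eq {β : ZMod a} (hβ : IsUnit β) :
    sawtoothSum β = 4 * ∑ x : ZMod a, (x.val : ℤ) * (β * x).val - a ^ 2 * (a - 1) := by
  have hterm (x : ZMod a) : sawtooth x * sawtooth (β * x) =
      a ^ 2 - 2 * a * x.val - 2 * a * (β * x).val + 4 * (x.val * (β * x).val) -
        if x = 0 then (a : ℤ) ^ 2 else 0 := by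
    rcases eq_or_ne x 0 with rfl | hx
    · simp
    · rw [sawtooth_of_ne_zero hx, sawtooth_of_ne_zero ((hβ.mul_right_eq_zero).not.2 hx), if_neg hx]
      ring
  have hperm := (IsUnit.isUnit_iff_mulLeft_bijective.1 hβ).sum_comp (fun x => (x.val : ℤ))
  simp only [sawtoothSum, hterm, sum_sub_distrib, sum_add_distrib, Fintype.sum_ite_eq', sum_const,
    card_univ, ZMod.card, ← mul_sum, nsmul_eq_mul]
  linear_combination (-2 * (a : ℤ)) * hperm - 2 * a * two_mul_sum_val (a := a)

lemma sq_dvd_sq_add_one_mul_sum_val_sq_sub {b : ℤ} (hb : IsUnit (b : ZMod a)) :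
    (a : ℤ) ^ 2 ∣ (b ^ 2 + 1) * ∑ x : ZMod a, (x.val : ℤ) ^ 2 -
      2 * b * ∑ x : ZMod a, (x.val : ℤ) * (b * x).val := by
  have hperm := (IsUnit.isUnit_iff_mulLeft_bijective.1 hb).sum_comp (fun x => (x.val : ℤ) ^ 2)
  have hcross : ∑ x : ZMod a, 2 * ((b * x).val : ℤ) * (b * x.val) =
      2 * b * ∑ x : ZMod a, (x.val : ℤ) * (b * x).val := by
    rw [mul_sum]
    exact sum_congr rfl fun _ _ => by ring
  have hsq : (b ^ 2 + 1) * ∑ x : ZMod a, (x.val : ℤ) ^ 2 -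
      2 * b * ∑ x : ZMod a, (x.val : ℤ) * (b * x).val =
      ∑ x : ZMod a, (((b * x).val : ℤ) - b * x.val) ^ 2 := by
    simp only [sub_sq, sum_add_distrib, sum_sub_distrib, mul_pow, ← mul_sum, hperm, hcross]
    ring
  rw [hsq]
  refine dvd_sum fun x _ => pow_dvd_pow_of_dvd ?_ 2
  rw [← intCast_zmod_eq_zero_iff_dvd]
  push_cast
  simp only [natCast_zmod_val, sub_self]

lemma sq_add_one_eq_zero_of_sawtoothSum_eq_zero {b : ℤ} (hb : IsUnit (b : ZMod a))
    (h : sawtoothSum (b : ZMod a) = 0) : (b : ZMod a) ^ 2 + 1 = 0 := by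
  have ha : (0 : ℤ) < a := by exact_mod_cast NeZero.pos a
  obtain ⟨c, hc⟩ := sq_dvd_sq_add_one_mul_sum_val_sq_sub hb
  have hT := sawtoothSum_eq hb
  have hQ := six_mul_sum_val_sq (a := a)
  have hdvd : (a : ℤ) ∣ (b ^ 2 + 1) * ((a - 1) * (2 * a - 1)) := by
    refine ⟨6 * c + 3 * b * (a - 1), mul_left_cancel₀ ha.ne' ?_⟩
    linear_combination -(b ^ 2 + 1) * hQ + 6 * hc + 3 * b * (h - hT)
  have hcop : IsCoprime (a : ℤ) ((a - 1) * (2 * a - 1)) := ⟨-(2 * a - 3), 1, by ring⟩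
  exact_mod_cast (intCast_zmod_eq_zero_iff_dvd _ _).2 (hcop.dvd_of_dvd_mul_right hdvd)

end ZMod

open ZMod

lemma four_mul_sq_mul_dedekindSum (a : ℕ) [NeZero a] (b : ℤ) :
    4 * a ^ 2 * dedekindSum a b = sawtoothSum (b : ZMod a) := by
  have hsum : ∑ k ∈ Ico 1 a, cot (π * k / a) * cot (π * b * k / a) =
      ∑ x : ZMod a, cot (π * x.val / a) * cot (π * b * x.val / a) := by
    rw [sum_univ_eq_sum_range (fun k => cot (π * k / a) * cot (π * b * k / a)), range_eq_Ico,
      sum_eq_sum_Ico_succ_bot (NeZero.pos a)]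
    simp [cot_eq_cos_div_sin]
  calc 4 * a ^ 2 * dedekindSum a b
      = ∑ x : ZMod a, cot (π * x.val / a) * (a * cot (π * (b * x.val : ℤ) / a)) := by
        rw [dedekindSum, hsum, mul_sum, mul_sum]
        refine sum_congr rfl fun x _ => ?_
        field_simp
        push_cast
        ring_nf
    _ = ∑ y : ZMod a, y.sawtooth *
          ∑ x : ZMod a, cot (π * x.val / a) * sin (2 * x.val * (π * (b * y.val : ℤ) / a)) := by
        simp_rw [nat_mul_cot_eq_sum_sawtooth_mul_sin, mul_sum]
        rw [sum_comm]
        refine sum_congr rfl fun y _ => sum_congr rfl fun x _ => ?_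
        push_cast
        ring_nf
    _ = sawtoothSum (b : ZMod a) := by
        simp_rw [sum_cot_mul_sin_eq_sawtooth, sawtoothSum]
        push_cast
        simp only [natCast_zmod_val]

theorem dedekindSum_eq_zero_iff (a : ℕ) (ha : 0 < a) (b : ℤ)
    (hab : IsCoprime (a : ℤ) b) :
    dedekindSum a b = 0 ↔ (a : ℤ) ∣ b ^ 2 + 1 := by
  have : NeZero a := ⟨ha.ne'⟩
  have hb : IsUnit (b : ZMod a) := (unitOfIsCoprime b hab.symm).isUnit
  have h4a : (4 * a ^ 2 : ℝ) ≠ 0 := by positivity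
  rw [← mul_eq_zero_iff_left h4a, four_mul_sq_mul_dedekindSum, Int.cast_eq_zero,
    ← intCast_zmod_eq_zero_iff_dvd]
  push_cast
  exact ⟨sq_add_one_eq_zero_of_sawtoothSum_eq_zero hb,
    fun h => sawtoothSum_eq_zero_of_sq_eq_neg_one (eq_neg_of_add_eq_zero_left h)⟩
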